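/- Let A be an Arens regular Banach algebra, and let D : A → A* be a bounded derivation whose second adjoint D'' : A** → A*** satisfies the conditions that A* has the Rw*wc-property and A** has the Lw*wc-property with respect to A. Then D'' : A** → A*** is a derivation with respect to the first Arens product, i.e., D''(a'' b'') = D''(a'') b'' + a'' D''(b'') for all a'', b'' ∈ A**. -/

import Mathlib

/-- The topological dual of a seminormed space, as `NormedSpace.Dual` was defined in the older
Mathlib (removed since). -/
abbrev NormedSpace.Dual (𝕜 : Type*) [NontriviallyNormedField 𝕜] (E : Type*)
    [SeminormedAddCommGroup E] [NormedSpace 𝕜 E] : Type _ := E →L[𝕜] 𝕜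

open ContinuousLinearMap NormedSpace Filter Topology Metric

noncomputable section

namespace Arens

section Bilinear

variable {X Y Z : Type*} [NormedAddCommGroup X] [NormedSpace ℂ X]
  [NormedAddCommGroup Y] [NormedSpace ℂ Y] [NormedAddCommGroup Z] [NormedSpace ℂ Z]

/-- The Arens adjoint `m*` of a bounded bilinear map `m : X × Y → Z`,
`⟨m*(z',x), y⟩ = ⟨z', m(x,y)⟩`. -/
def adj (f : X →L[ℂ] Y →L[ℂ] Z) : Dual ℂ Z →L[ℂ] X →L[ℂ] Dual ℂ Y :=
  ((ContinuousLinearMap.compL ℂ X (Y →L[ℂ] Z) (Y →L[ℂ] ℂ)).flip f).comp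
    (ContinuousLinearMap.compL ℂ Y Z ℂ)

@[simp] lemma adj_apply (f : X →L[ℂ] Y →L[ℂ] Z) (z' : Dual ℂ Z) (x : X) (y : Y) :
    adj f z' x y = z' (f x y) := rfl

/-- The Arens triple-adjoint extension `m*** : X** × Y** → Z**` of a bounded
bilinear map `m : X × Y → Z`. -/
def ext3 (f : X →L[ℂ] Y →L[ℂ] Z) :
    Dual ℂ (Dual ℂ X) →L[ℂ] Dual ℂ (Dual ℂ Y) →L[ℂ] Dual ℂ (Dual ℂ Z) :=
  adj (adj (adj f))

/-- Weak-star convergence of a net `(a i)` of `X` (canonically embedded in `X**`)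
to an element `F` of the bidual `X**`. -/
def WStarTendsto {ι : Type*} (a : ι → X) (l : Filter ι) (F : Dual ℂ (Dual ℂ X)) : Prop :=
  ∀ x' : Dual ℂ X, Tendsto (fun i => x' (a i)) l (𝓝 (F x'))

end Bilinear

section Algebra

variable (A : Type*) [NonUnitalNormedRing A] [NormedSpace ℂ A]
  [IsScalarTower ℂ A A] [SMulCommClass ℂ A A]

/-- The multiplication of a (non-unital) Banach algebra as a bounded bilinear map. -/
abbrev mulCLM : A →L[ℂ] A →L[ℂ] A := ContinuousLinearMap.mul ℂ A

/-- The first Arens product on the bidual `A**`. -/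
def fstArens (F G : Dual ℂ (Dual ℂ A)) : Dual ℂ (Dual ℂ A) := ext3 (mulCLM A) F G

/-- The second Arens product on the bidual `A**` (`m^{t***t}`). -/
def sndArens (F G : Dual ℂ (Dual ℂ A)) : Dual ℂ (Dual ℂ A) :=
  ext3 ((mulCLM A).flip) G F

/-- A Banach algebra is Arens regular when its two Arens products coincide. -/
def ArensRegular : Prop := ∀ F G : Dual ℂ (Dual ℂ A), fstArens A F G = sndArens A F G

end Algebra

section ModuleWC

universe u
variable {A : Type u} {B : Type*} [NonUnitalNormedRing A] [NormedSpace ℂ A]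
  [NormedAddCommGroup B] [NormedSpace ℂ B]

/-- For a left Banach `A`-module action `πl` on `B`, the element `b' a ∈ B*`,
`⟨b' a, b⟩ = ⟨b', a • b⟩`. -/
def dualSmulL (πl : A →L[ℂ] B →L[ℂ] B) (b' : Dual ℂ B) (a : A) : Dual ℂ B := adj πl b' a

/-- The Arens extension `b' a'' ∈ B***`, `⟨b'', b' a''⟩ = ⟨π_ℓ***(a'', b''), b'⟩`. -/
def dualSmulLStar (πl : A →L[ℂ] B →L[ℂ] B) (b' : Dual ℂ B) (F : Dual ℂ (Dual ℂ A)) :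
    Dual ℂ (Dual ℂ (Dual ℂ B)) :=
  (inclusionInDoubleDual ℂ (Dual ℂ B) b').comp (ext3 πl F)

/-- `b' ∈ B*` has the left-weak*-weak convergence property (`Lw*wc`) with respect to `A`:
for every net `(a_α) ⊆ A` with `a_α → a''` weak* in `A**`, the net `b' a_α` converges
weakly to `b' a''` in `B*`. -/
def LWStarWC (πl : A →L[ℂ] B →L[ℂ] B) (b' : Dual ℂ B) : Prop :=
  ∀ (ι : Type u) (l : Filter ι) (a : ι → A) (F : Dual ℂ (Dual ℂ A)),
    WStarTendsto a l F →
    ∀ b'' : Dual ℂ (Dual ℂ B),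
      Tendsto (fun i => b'' (dualSmulL πl b' (a i))) l (𝓝 (dualSmulLStar πl b' F b''))

/-- For a right Banach `A`-module action `πr` on `B`, the element `a b' ∈ B*`,
`⟨a b', b⟩ = ⟨b', b • a⟩`. -/
def dualSmulR (πr : B →L[ℂ] A →L[ℂ] B) (a : A) (b' : Dual ℂ B) : Dual ℂ B :=
  adj πr.flip b' a

/-- The Arens extension `a'' b' ∈ B***`, `⟨b'', a'' b'⟩ = ⟨π_r^{t***}(a'', b''), b'⟩`. -/
def dualSmulRStar (πr : B →L[ℂ] A →L[ℂ] B) (F : Dual ℂ (Dual ℂ A)) (b' : Dual ℂ B) :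
    Dual ℂ (Dual ℂ (Dual ℂ B)) :=
  (inclusionInDoubleDual ℂ (Dual ℂ B) b').comp (ext3 πr.flip F)

/-- `b' ∈ B*` has the right-weak*-weak convergence property (`Rw*wc`) with respect to `A`. -/
def RWStarWC (πr : B →L[ℂ] A →L[ℂ] B) (b' : Dual ℂ B) : Prop :=
  ∀ (ι : Type u) (l : Filter ι) (a : ι → A) (F : Dual ℂ (Dual ℂ A)),
    WStarTendsto a l F →
    ∀ b'' : Dual ℂ (Dual ℂ B),
      Tendsto (fun i => b'' (dualSmulR πr (a i) b')) l (𝓝 (dualSmulRStar πr F b' b''))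

end ModuleWC

section AlgebraWC

variable (A : Type u) [NonUnitalNormedRing A] [NormedSpace ℂ A]
  [IsScalarTower ℂ A A] [SMulCommClass ℂ A A]

/-- The product `a'' a' ∈ A*` (first step of the first Arens product):
`⟨a'' a', a⟩ = ⟨a'', a' a⟩` where `⟨a' a, b⟩ = ⟨a', a b⟩`. -/
def biSmul (F : Dual ℂ (Dual ℂ A)) (a' : Dual ℂ A) : Dual ℂ A :=
  F.comp (adj (mulCLM A) a')

/-- The element `a · a' ∈ A*`, `⟨a a', b⟩ = ⟨a', b a⟩`. -/
def leftMulDual (a : A) (a' : Dual ℂ A) : Dual ℂ A := a'.comp ((mulCLM A).flip a)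

/-- `A*` has the `Rw*wc`-property with respect to `A`: for every `a' ∈ A*` and every net
`(a_α) ⊆ A` with `a_α → a''` weak* in `A**`, the net `a_α a'` (`⟨a_α a', b⟩ = ⟨a', b a_α⟩`)
converges weakly in `A*` to `a'' a'`. -/
def RWStarWCDualProp : Prop :=
  ∀ (a' : Dual ℂ A) (ι : Type u) (l : Filter ι) (a : ι → A) (F : Dual ℂ (Dual ℂ A)),
    WStarTendsto a l F →
    ∀ x'' : Dual ℂ (Dual ℂ A),
      Tendsto (fun i => x'' (leftMulDual A (a i) a')) l (𝓝 (x'' (biSmul A F a')))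

/-- `A*` has the `Lw*wc`-property with respect to `A`. -/
def LWStarWCDualProp : Prop := ∀ a' : Dual ℂ A, LWStarWC (mulCLM A) a'

/-- `A**` has the `Lw*wc`-property with respect to `A`: for every `x'' ∈ A**` and every net
`(a_α) ⊆ A` with `a_α → a''` weak* in `A**`, the net `x'' a_α` converges weakly in `A**`
to `x'' a''`. -/
def LWStarWCBidualProp : Prop :=
  ∀ (x'' : Dual ℂ (Dual ℂ A)) (ι : Type u) (l : Filter ι) (a : ι → A) (F : Dual ℂ (Dual ℂ A)),
    WStarTendsto a l F →
    ∀ Φ : Dual ℂ (Dual ℂ (Dual ℂ A)),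
      Tendsto (fun i => Φ (fstArens A x'' (inclusionInDoubleDual ℂ A (a i)))) l
        (𝓝 (Φ (fstArens A x'' F)))

/-- `D : A → A*` is a derivation: `D(ab) = a·D(b) + D(a)·b`, where
`(a·f)(x) = f(x a)` and `(f·b)(x) = f(b x)`. -/
def IsDerivation (D : A →L[ℂ] Dual ℂ A) : Prop :=
  ∀ a b : A, D (a * b) = (D b).comp ((mulCLM A).flip a) + (D a).comp (mulCLM A b)

/-- `A` is weakly amenable: every bounded derivation `D : A → A*` is inner. -/
def WeaklyAmenable : Prop :=
  ∀ D : A →L[ℂ] Dual ℂ A, IsDerivation A D →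
    ∃ f : Dual ℂ A, ∀ a : A, D a = f.comp ((mulCLM A).flip a) - f.comp (mulCLM A a)

/-- The left action of `A**` (with the first Arens product) on `A***`:
`(F·Φ)(G) = Φ(G F)`. -/
def ddLeftAct (F : Dual ℂ (Dual ℂ A)) (Φ : Dual ℂ (Dual ℂ (Dual ℂ A))) :
    Dual ℂ (Dual ℂ (Dual ℂ A)) :=
  Φ.comp ((ext3 (mulCLM A)).flip F)

/-- The right action of `A**` (with the first Arens product) on `A***`:
`(Φ·F)(G) = Φ(F G)`. -/
def ddRightAct (F : Dual ℂ (Dual ℂ A)) (Φ : Dual ℂ (Dual ℂ (Dual ℂ A))) :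
    Dual ℂ (Dual ℂ (Dual ℂ A)) :=
  Φ.comp (ext3 (mulCLM A) F)

/-- A bounded map `D : A** → A***` is a derivation for the first Arens product. -/
def IsDerivationDD (D : Dual ℂ (Dual ℂ A) →L[ℂ] Dual ℂ (Dual ℂ (Dual ℂ A))) : Prop :=
  ∀ F G : Dual ℂ (Dual ℂ A),
    D (fstArens A F G) = ddLeftAct A F (D G) + ddRightAct A G (D F)

/-- `A**` (with the first Arens product) is weakly amenable. -/
def WeaklyAmenableDD : Prop :=
  ∀ D : Dual ℂ (Dual ℂ A) →L[ℂ] Dual ℂ (Dual ℂ (Dual ℂ A)), IsDerivationDD A D →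
    ∃ Φ : Dual ℂ (Dual ℂ (Dual ℂ A)), ∀ F, D F = ddLeftAct A F Φ - ddRightAct A F Φ

/-- `A*** A** ⊆ A*`: each product `x''' x''` (`⟨x''' x'', a''⟩ = ⟨x''', x'' a''⟩`)
lies in the canonical image of `A*` in `A***`. -/
def TripleDualMulIntoDual : Prop :=
  ∀ (Φ : Dual ℂ (Dual ℂ (Dual ℂ A))) (F : Dual ℂ (Dual ℂ A)),
    ∃ a' : Dual ℂ A, ddRightAct A F Φ = inclusionInDoubleDual ℂ (Dual ℂ A) a'

end AlgebraWC

section DualMap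

variable {X Y : Type*} [NormedAddCommGroup X] [NormedSpace ℂ X]
  [NormedAddCommGroup Y] [NormedSpace ℂ Y]

/-- The Banach-space adjoint of a bounded operator. -/
def dualMap' (T : X →L[ℂ] Y) : Dual ℂ Y →L[ℂ] Dual ℂ X :=
  (ContinuousLinearMap.compL ℂ X Y ℂ).flip T

/-- The second adjoint `D'' : A** → A***` of `D : A → A*`. -/
def secondAdjoint {A : Type*} [NonUnitalNormedRing A] [NormedSpace ℂ A]
    (D : A →L[ℂ] Dual ℂ A) :
    Dual ℂ (Dual ℂ A) →L[ℂ] Dual ℂ (Dual ℂ (Dual ℂ A)) :=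
  dualMap' (dualMap' D)

end DualMap

section Biregular

variable (A B : Type*) [NonUnitalNormedRing A] [NormedSpace ℂ A]
  [NonUnitalNormedRing B] [NormedSpace ℂ B]

/-- A bounded bilinear form `m : A × B → ℂ` is biregular (Ülger): for any sequences
`(a_i), (aa2_j)` in the unit ball of `A` and `(b_i), (bb_j)` in the unit ball of `B`,
the two iterated limits of `m(a_i aa2_j, b_i bb_j)` coincide whenever both exist. -/
def Biregular (m : A →L[ℂ] B →L[ℂ] ℂ) : Prop :=
  ∀ (a aa2 : ℕ → A) (b bb : ℕ → B),
    (∀ i, ‖a i‖ ≤ 1) → (∀ j, ‖aa2 j‖ ≤ 1) → (∀ i, ‖b i‖ ≤ 1) → (∀ j, ‖bb j‖ ≤ 1) →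
    ∀ (g h : ℕ → ℂ) (L L' : ℂ),
      (∀ i, Tendsto (fun j => m (a i * aa2 j) (b i * bb j)) atTop (𝓝 (g i))) →
      Tendsto g atTop (𝓝 L) →
      (∀ j, Tendsto (fun i => m (a i * aa2 j) (b i * bb j)) atTop (𝓝 (h j))) →
      Tendsto h atTop (𝓝 L') → L = L'

/-- Arens regularity of the projective tensor product `A ⊗̂ B`.  By Ülger's theorem
(`[22, Theorem 3.4]`), `A ⊗̂ B` is Arens regular if and only if every bounded bilinear
form `m : A × B → ℂ` is biregular; since the dual of `A ⊗̂ B` is exactly the space of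
bounded bilinear forms on `A × B`, we take this equivalent characterization as the
formalization of Arens regularity of `A ⊗̂ B`. -/
def ProjArensRegular : Prop := ∀ m : A →L[ℂ] B →L[ℂ] ℂ, Biregular A B m

end Biregular

end Arens

/-!
Write `y' = D'(x'') ∈ A*`, so that `⟨D''(F G), x''⟩ = ⟨F, G y'⟩`. The derivation identity for `D`
splits `G y'` on each `a ∈ A` as `⟨D''(G), x'' a⟩ + ⟨G x'', D a⟩`. Along a net `a_α → F` weak*,
the left side tends to `⟨F, G y'⟩`, the first summand tends to `⟨D''(G), x'' F⟩` by the
`Lw*wc`-property of `A**`, and the second to `⟨D''(F), G x''⟩` by weak* convergence alone.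
-/

section

variable {𝕜 E : Type*} [NontriviallyNormedField 𝕜] [SeminormedAddCommGroup E] [NormedSpace 𝕜 E]

lemma exists_eq_on_finset_of_bidual (F : Dual 𝕜 (Dual 𝕜 E)) (s : Finset (Dual 𝕜 E)) :
    ∃ x : E, ∀ f ∈ s, f x = F f := by
  classical
  let T : E →ₗ[𝕜] s → 𝕜 := LinearMap.pi fun f => (f.1 : E →ₗ[𝕜] 𝕜)
  have hF : (fun f : s => F f) ∈ LinearMap.range T := by
    rw [← Subspace.forall_mem_dualAnnihilator_apply_eq_zero_iff]
    intro φ hφ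
    rw [Submodule.mem_dualAnnihilator] at hφ
    let c : s → 𝕜 := fun f => φ fun g => if f = g then 1 else 0
    have hcomb : ∑ f : s, c f • (f : Dual 𝕜 E) = 0 := by
      ext x
      rw [zero_apply, ← hφ (T x) ⟨x, rfl⟩, φ.pi_apply_eq_sum_univ]
      simp only [sum_apply, smul_apply, smul_eq_mul, mul_comm]
      rfl
    have hFcomb := congrArg F hcomb
    rw [map_sum, map_zero] at hFcomb
    rw [φ.pi_apply_eq_sum_univ]
    refine (Finset.sum_congr rfl fun f _ => ?_).trans hFcomb
    rw [map_smul, smul_eq_mul, smul_eq_mul, mul_comm]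
  obtain ⟨x, hx⟩ := hF
  exact ⟨x, fun f hf => congrFun hx ⟨f, hf⟩⟩

end

namespace Arens

variable {X : Type*} [NormedAddCommGroup X] [NormedSpace ℂ X]

lemma exists_wStarTendsto (F : Dual ℂ (Dual ℂ X)) :
    ∃ x : Finset (Dual ℂ X) → X, WStarTendsto x atTop F := by
  choose x hx using exists_eq_on_finset_of_bidual F
  refine ⟨x, fun f => tendsto_const_nhds.congr' ?_⟩
  filter_upwards [eventually_ge_atTop {f}] with s hs
  exact (hx s f (Finset.singleton_subset_iff.mp hs)).symm

variable {A : Type*} [NonUnitalNormedRing A] [NormedSpace ℂ A]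
  [IsScalarTower ℂ A A] [SMulCommClass ℂ A A]

lemma adj_mulCLM_dualMap'_of_isDerivation {D : A →L[ℂ] Dual ℂ A} (hD : IsDerivation A D)
    (x'' : Dual ℂ (Dual ℂ A)) (a : A) :
    adj (mulCLM A) (dualMap' D x'') a =
      dualMap' D (fstArens A x'' (inclusionInDoubleDual ℂ A a)) + biSmul A x'' (D a) := by
  ext c
  change x'' (D (a * c)) = x'' (adj (adj (mulCLM A)) (inclusionInDoubleDual ℂ A a) (D c)) +
    x'' (adj (mulCLM A) (D a) c)
  rw [hD, ← map_add]
  rfl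

lemma biSmul_dualMap'_of_isDerivation {D : A →L[ℂ] Dual ℂ A} (hD : IsDerivation A D)
    (G x'' : Dual ℂ (Dual ℂ A)) (a : A) :
    biSmul A G (dualMap' D x'') a =
      secondAdjoint D G (fstArens A x'' (inclusionInDoubleDual ℂ A a)) +
        dualMap' D (fstArens A G x'') a := by
  change G (adj (mulCLM A) (dualMap' D x'') a) = _
  rw [adj_mulCLM_dualMap'_of_isDerivation hD, map_add]
  rfl

end Arens

theorem secondAdjoint_isDerivation_general
    {A : Type*} [NonUnitalNormedRing A] [NormedSpace ℂ A]
    [IsScalarTower ℂ A A] [SMulCommClass ℂ A A]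
    (D : A →L[ℂ] Dual ℂ A) (hD : Arens.IsDerivation A D)
    (hL : Arens.LWStarWCBidualProp A) :
    Arens.IsDerivationDD A (Arens.secondAdjoint D) := by
  intro F G
  ext x''
  obtain ⟨a, ha⟩ := Arens.exists_wStarTendsto F
  have hsplit := (hL x'' _ atTop a F ha (Arens.secondAdjoint D G)).add
    (ha (Arens.dualMap' D (Arens.fstArens A G x'')))
  simp only [← Arens.biSmul_dualMap'_of_isDerivation hD] at hsplit
  exact tendsto_nhds_unique (ha _) hsplit

/-- If `A` is Arens regular, `D : A → A*` is a bounded derivation, `A*` has the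
`Rw*wc`-property and `A**` has the `Lw*wc`-property with respect to `A`, then the second
adjoint `D'' : A** → A***` is a derivation for the first Arens product. -/
theorem secondAdjoint_isDerivation
    {A : Type*} [NonUnitalNormedRing A] [NormedSpace ℂ A]
    [IsScalarTower ℂ A A] [SMulCommClass ℂ A A] [CompleteSpace A]
    (hreg : Arens.ArensRegular A)
    (D : A →L[ℂ] Dual ℂ A) (hD : Arens.IsDerivation A D)
    (hR : Arens.RWStarWCDualProp A) (hL : Arens.LWStarWCBidualProp A) :
    Arens.IsDerivationDD A (Arens.secondAdjoint D) :=
  secondAdjoint_isDerivation_general D hD hL
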